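/- arXiv:2107.08955 — 3 statements merged into one kernel-verified Lean document; each statement's English description precedes it below -/
import Mathlib

section
/- Let c be a nonzero vector in F_q^n. Then the Hamming weight of c equals w if and only if w is the maximal integer for which there exist a linearly independent set {w_1,...,w_w} in F_q^n and vectors v_1,...,v_w in F_q^n such that c*v_i = w_i for all i=1,...,w. -/
open Finset

lemma mul_single_eq (n : ℕ) (F : Type) [Field F] [DecidableEq F]
    (c : Fin n → F) (j : Fin n) (a : F) :
    c * Pi.single j a = Pi.single j (c j * a) := by
  funext k
  by_cases h : k = j
  · subst h; simp
  · simp [Pi.single_eq_of_ne h]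

lemma mem_set (n : ℕ) (F : Type) [Field F] [DecidableEq F]
    (c : Fin n → F) :
    ∃ (W V : Fin (hammingNorm c) → (Fin n → F)),
      LinearIndependent F W ∧ ∀ i, c * V i = W i := by
  classical
  set s : Finset (Fin n) := {i | c i ≠ 0} with hs
  have hcard : s.card = hammingNorm c := rfl
  have e : Fin (hammingNorm c) ≃ s := (Fintype.equivFinOfCardEq (by simp [hcard])).symm
  have hmem : ∀ i, c ((e i : s) : Fin n) ≠ 0 := fun i => by
    have h2 := (e i).2
    exact (Finset.mem_filter.mp h2).2
  refine ⟨fun i => Pi.single ((e i : s) : Fin n) 1,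
    fun i => Pi.single ((e i : s) : Fin n) (c ((e i : s) : Fin n))⁻¹, ?_, ?_⟩
  · have hinj : Function.Injective (fun i => ((e i : s) : Fin n)) :=
      Subtype.val_injective.comp e.injective
    have hb := (Pi.basisFun F (Fin n)).linearIndependent
    have := hb.comp _ hinj
    convert this using 1
    funext i
    simp [Pi.basisFun_apply]
  · intro i
    rw [mul_single_eq, mul_inv_cancel₀ (hmem i)]

lemma upper_bd (n : ℕ) (F : Type) [Field F] [Fintype F] [DecidableEq F]
    (c : Fin n → F) (w' : ℕ) (W V : Fin w' → (Fin n → F))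
    (hW : LinearIndependent F W) (hWV : ∀ i, c * V i = W i) :
    w' ≤ hammingNorm c := by
  classical
  set s : Finset (Fin n) := {i | c i ≠ 0} with hs
  have hcard : s.card = hammingNorm c := rfl
  let φ : (Fin n → F) →ₗ[F] (s → F) := LinearMap.funLeft F F (Subtype.val)
  have hli : LinearIndependent F (fun i => φ (W i)) := by
    rw [Fintype.linearIndependent_iff] at hW ⊢
    intro g hg
    apply hW
    funext j
    by_cases hj : j ∈ s
    · have := congrFun hg ⟨j, hj⟩
      simpa [φ, LinearMap.funLeft, Finset.sum_apply] using this
    · have hcj : c j = 0 := by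
        by_contra h
        exact hj (by simp [hs, h])
      have hWj : ∀ i, W i j = 0 := fun i => by
        rw [← hWV i]; simp [hcj]
      simp [Finset.sum_apply, hWj]
  have := hli.fintype_card_le_finrank
  simpa [Module.finrank_pi, hcard] using this

/-- For a nonzero `c ∈ F_q^n`, the Hamming weight of `c` equals `w` iff `w` is the
maximal integer for which there exist a linearly independent family `w_1, ..., w_w` in `F_q^n`
and vectors `v_1, ..., v_w` with `c * v_i = w_i` for all `i` (componentwise product). -/
theorem stmt1 (q n : ℕ) (hq : IsPrimePow q) (hn : 0 < n)
    (F : Type) [Field F] [Fintype F] [DecidableEq F] (hcard : Fintype.card F = q)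
    (c : Fin n → F) (hc : c ≠ 0) (w : ℕ) :
    hammingNorm c = w ↔
      IsGreatest {w' : ℕ | ∃ (W : Fin w' → (Fin n → F)) (V : Fin w' → (Fin n → F)),
        LinearIndependent F W ∧ ∀ i, c * V i = W i} w := by
  constructor
  · rintro rfl
    constructor
    · exact mem_set n F c
    · rintro w' ⟨W, V, hW, hWV⟩
      exact upper_bd n F c w' W V hW hWV
  · rintro ⟨⟨W, V, hW, hWV⟩, hub⟩
    have h1 : w ≤ hammingNorm c := upper_bd n F c w W V hW hWV
    have h2 : hammingNorm c ≤ w := hub (mem_set n F c)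
    omega
end

section
/- Let c be a nonzero vector in F_q^n and let V be an F_q-subspace of F_q^n of dimension w such that for every nonzero v in V there exists u in F_q^n with c*(v*u) nonzero (equivalently the dot product c·(v*u) ≠ 0). Then w_H(c) ≥ w. More precisely: let {b_1,...,b_n} be a basis of F_q^n, let m be the smallest index with c·b_m ≠ 0, and suppose for every nonzero v in V there exists u in F_q^n with v*u in Span{b_1,...,b_m} \ Span{b_1,...,b_{m-1}}; then w_H(c) ≥ w. -/
/-- The linear functional `x ↦ ∑ i, c i * x i`. -/
noncomputable def dotMap {n : ℕ} (F : Type) [Field F] (c : Fin n → F) :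
    (Fin n → F) →ₗ[F] F where
  toFun x := ∑ i, c i * x i
  map_add' x y := by simp [mul_add, Finset.sum_add_distrib]
  map_smul' a x := by simp [Finset.mul_sum]; ring_nf; simp [mul_comm, mul_left_comm]

lemma key {n : ℕ} (F : Type) [Field F] [Fintype F] [DecidableEq F]
    (c : Fin n → F) (V : Submodule F (Fin n → F))
    (h : ∀ v ∈ V, v ≠ 0 → ∃ u : Fin n → F, ∑ i, c i * (v * u) i ≠ 0) :
    Module.finrank F V ≤ hammingNorm c := by
  classical
  let ψ : V →ₗ[F] ({i : Fin n // c i ≠ 0} → F) :=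
    { toFun := fun v j => v.1 j.1
      map_add' := fun x y => rfl
      map_smul' := fun a x => rfl }
  have hinj : Function.Injective ψ := by
    rw [← LinearMap.ker_eq_bot, LinearMap.ker_eq_bot']
    intro v hv
    by_contra hv0
    obtain ⟨u, hu⟩ := h v.1 v.2 (fun h0 => hv0 (Subtype.ext h0))
    apply hu
    apply Finset.sum_eq_zero
    intro i _
    by_cases hci : c i = 0
    · simp [hci]
    · have : v.1 i = 0 := congrFun hv ⟨i, hci⟩
      simp [Pi.mul_apply, this]
  calc Module.finrank F V ≤ Module.finrank F ({i : Fin n // c i ≠ 0} → F) :=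
        LinearMap.finrank_le_finrank_of_injective hinj
    _ = Fintype.card {i : Fin n // c i ≠ 0} := by
        simp [Module.finrank_pi]
    _ = hammingNorm c := by
        rw [Fintype.card_subtype, hammingNorm]

/-- If `V ⊆ F_q^n` has dimension `w` and for every nonzero `v ∈ V` there is `u`
with `c · (v * u) ≠ 0`, then `w_H(c) ≥ w`.  More precisely, if `b_1, ..., b_n` is a basis,
`m` is the smallest index with `c · b_m ≠ 0`, and for every nonzero `v ∈ V` there is `u` with
`v * u ∈ Span{b_1,...,b_m} \ Span{b_1,...,b_{m-1}}`, then `w_H(c) ≥ w`. -/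
theorem stmt2 (q n : ℕ) (hq : IsPrimePow q)
    (F : Type) [Field F] [Fintype F] [DecidableEq F] (hcard : Fintype.card F = q)
    (c : Fin n → F) (hc : c ≠ 0)
    (V : Submodule F (Fin n → F)) (w : ℕ) (hV : Module.finrank F V = w) :
    ((∀ v ∈ V, v ≠ 0 → ∃ u : Fin n → F, ∑ i, c i * (v * u) i ≠ 0) → w ≤ hammingNorm c) ∧
    (∀ (b : Module.Basis (Fin n) F (Fin n → F)) (m : Fin n),
      IsLeast {i : Fin n | ∑ k, c k * b i k ≠ 0} m →
      (∀ v ∈ V, v ≠ 0 → ∃ u : Fin n → F,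
        v * u ∈ Submodule.span F (b '' {i | i ≤ m}) ∧
        v * u ∉ Submodule.span F (b '' {i | i < m})) →
      w ≤ hammingNorm c) := by
  subst hV
  constructor
  · exact key F c V
  · rintro b m ⟨hmem, hlb⟩ H
    apply key F c V
    intro v hv hv0
    obtain ⟨u, hu1, hu2⟩ := H v hv hv0
    refine ⟨u, ?_⟩
    have hker : Submodule.span F (b '' {i | i < m}) ≤ LinearMap.ker (dotMap F c) := by
      rw [Submodule.span_le]
      rintro _ ⟨i, hi, rfl⟩
      have : ¬ (∑ k, c k * b i k ≠ 0) := fun hne => absurd (hlb hne) (not_le.mpr hi)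
      simpa [dotMap, LinearMap.mem_ker] using not_not.mp this
    have hset : {i : Fin n | i ≤ m} = insert m {i : Fin n | i < m} := by
      ext i; simp [le_iff_lt_or_eq, or_comm]
    rw [hset, Set.image_insert_eq] at hu1
    rw [Submodule.mem_span_insert] at hu1
    obtain ⟨a, z, hz, hvu⟩ := hu1
    have ha : a ≠ 0 := by
      rintro rfl
      simp at hvu
      exact hu2 (hvu ▸ hz)
    have hz0 : dotMap F c z = 0 := hker hz
    have : (∑ i, c i * (v * u) i) = dotMap F c (v * u) := rfl
    rw [this, hvu, map_add, map_smul, hz0, add_zero, smul_eq_mul]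
    exact mul_ne_zero ha hmem
end

section
/- Footprint bound: for any ideal J ⊆ F_q[X_1,...,X_m] and any monomial ordering ≺, the number of points of the variety V(J_q) (where J_q = J + ⟨X_1^q - X_1,...,X_m^q - X_m⟩) equals the cardinality of the footprint Δ_≺(J_q), the set of monomials that are not leading monomials of any polynomial in J_q. -/
open MvPolynomial

namespace Stmt8Aux

variable {m : ℕ} {K : Type} [Field K] [Fintype K]

noncomputable def fieldIdeal (m : ℕ) (K : Type) [Field K] [Fintype K] :
    Ideal (MvPolynomial (Fin m) K) :=
  Ideal.span {g | ∃ j : Fin m, g = X j ^ Fintype.card K - X j}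

theorem eval_fieldIdeal {g : MvPolynomial (Fin m) K} (hg : g ∈ fieldIdeal m K)
    (v : Fin m → K) : eval v g = 0 := by
  induction hg using Submodule.span_induction with
  | mem x hx =>
    obtain ⟨j, rfl⟩ := hx
    simp [FiniteField.pow_card]
  | zero => simp
  | add x y _ _ hx hy => simp [hx, hy]
  | smul c x _ hx => simp [smul_eq_mul, hx]

theorem apply_le_weight (e : Fin m →₀ ℕ) (j : Fin m) : e j ≤ e.sum fun _ k => k := by
  by_cases h : e j = 0
  · simp [h]
  · exact Finset.single_le_sum (fun _ _ => Nat.zero_le _) (Finsupp.mem_support_iff.2 h)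

/-- single step of reduction by the field equation -/
theorem step_mem (j : Fin m) (e : Fin m →₀ ℕ) (he : Fintype.card K ≤ e j) :
    (monomial e (1 : K)) - monomial (e - Finsupp.single j (Fintype.card K - 1)) 1
      ∈ fieldIdeal m K := by
  set c := Fintype.card K
  have key : (monomial (e - Finsupp.single j c) (1 : K)) * (X j ^ c - X j)
      = monomial e 1 - monomial (e - Finsupp.single j (c - 1)) 1 := by
    rw [mul_sub, X_pow_eq_monomial, ← pow_one (X j), X_pow_eq_monomial,
      monomial_mul, monomial_mul, one_mul]
    have hA : (e - Finsupp.single j c) + Finsupp.single j c = e := by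
      ext i
      simp only [Finsupp.add_apply, Finsupp.tsub_apply, Finsupp.single_apply]
      rcases eq_or_ne j i with rfl | h
      · simp only [if_pos rfl, if_true]; omega
      · simp [h]
    have hB : (e - Finsupp.single j c) + Finsupp.single j 1
        = e - Finsupp.single j (c - 1) := by
      have h1 : 1 < c := Fintype.one_lt_card_iff_nontrivial.2 inferInstance
      ext i
      simp only [Finsupp.add_apply, Finsupp.tsub_apply, Finsupp.single_apply]
      rcases eq_or_ne j i with rfl | h
      · simp only [if_pos rfl, if_true]; omega
      · simp [h]
    rw [hA, hB]
  rw [← key]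
  exact Ideal.mul_mem_left _ _ (Ideal.subset_span ⟨j, rfl⟩)

theorem reduce_monomial :
    ∀ (n : ℕ) (e : Fin m →₀ ℕ), (e.sum fun _ k => k) ≤ n →
      ∃ p : MvPolynomial (Fin m) K, (monomial e 1 - p) ∈ fieldIdeal m K ∧
        ∀ d ∈ p.support, (∀ j, d j < Fintype.card K) ∧ d ≤ e := by
  classical
  have hq : 1 < Fintype.card K := Fintype.one_lt_card_iff_nontrivial.2 inferInstance
  intro n
  induction n with
  | zero =>
    intro e he
    refine ⟨monomial e 1, by simp [fieldIdeal], fun d hd => ?_⟩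
    rw [support_monomial, if_neg one_ne_zero, Finset.mem_singleton] at hd
    obtain rfl := hd
    refine ⟨fun j => ?_, le_refl _⟩
    have h1 := apply_le_weight d j
    omega
  | succ n IH =>
    intro e he
    by_cases hbox : ∀ j, e j < Fintype.card K
    · refine ⟨monomial e 1, by simp [fieldIdeal], fun d hd => ?_⟩
      rw [support_monomial, if_neg one_ne_zero, Finset.mem_singleton] at hd
      obtain rfl := hd
      exact ⟨hbox, le_refl _⟩
    · push_neg at hbox
      obtain ⟨j, hj⟩ := hbox
      set e' := e - Finsupp.single j (Fintype.card K - 1) with he'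
      have hsle : Finsupp.single j (Fintype.card K - 1) ≤ e :=
        Finsupp.single_le_iff.2 (by omega)
      have hsum : (e'.sum fun _ k => k) ≤ n := by
        have hadd : e' + Finsupp.single j (Fintype.card K - 1) = e :=
          tsub_add_cancel_of_le hsle
        have : (e.sum fun _ k => k)
            = (e'.sum fun _ k => k) + (Fintype.card K - 1) := by
          conv_lhs => rw [← hadd]
          rw [Finsupp.sum_add_index' (fun _ => rfl) (fun _ _ _ => rfl),
            Finsupp.sum_single_index rfl]
        omega
      obtain ⟨p, hp1, hp2⟩ := IH e' hsum
      refine ⟨p, ?_, fun d hd => ⟨(hp2 d hd).1, le_trans (hp2 d hd).2 tsub_le_self⟩⟩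
      have := step_mem j e hj
      have h2 : (monomial e (1:K) - monomial e' 1) + (monomial e' 1 - p)
          = monomial e 1 - p := by ring
      rw [← h2]
      exact Ideal.add_mem _ this hp1

theorem reduce_poly (f : MvPolynomial (Fin m) K) :
    ∃ p : MvPolynomial (Fin m) K, f - p ∈ fieldIdeal m K ∧
      ∀ d ∈ p.support, (∀ j, d j < Fintype.card K) ∧ ∃ e ∈ f.support, d ≤ e := by
  choose p hp1 hp2 using fun e : Fin m →₀ ℕ =>
    reduce_monomial (K := K) (e.sum fun _ k => k) e (le_refl _)
  refine ⟨∑ e ∈ f.support, coeff e f • p e, ?_, ?_⟩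
  · have hf : ∑ e ∈ f.support, coeff e f • (monomial e (1:K)) = f := by
      conv_rhs => rw [← support_sum_monomial_coeff f]
      exact Finset.sum_congr rfl fun e _ => by rw [smul_monomial, smul_eq_mul, mul_one]
    have : f - ∑ e ∈ f.support, coeff e f • p e
        = ∑ e ∈ f.support, coeff e f • (monomial e 1 - p e) := by
      rw [Finset.sum_congr rfl (fun e _ => smul_sub (coeff e f) _ (p e)),
        Finset.sum_sub_distrib, hf]
    rw [this]
    exact Submodule.sum_mem _ fun e _ => by
      rw [smul_eq_C_mul]
      exact Ideal.mul_mem_left _ _ (hp1 e)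
  · intro d hd
    rw [mem_support_iff] at hd
    rw [coeff_sum] at hd
    obtain ⟨e, he, hne⟩ := Finset.exists_ne_zero_of_sum_ne_zero hd
    rw [coeff_smul, smul_eq_mul] at hne
    have : d ∈ (p e).support := mem_support_iff.2 (right_ne_zero_of_mul hne)
    exact ⟨(hp2 e d this).1, e, he, (hp2 e d this).2⟩



theorem mem_fieldIdeal_of_eval_zero (f : MvPolynomial (Fin m) K)
    (h : ∀ v : Fin m → K, eval v f = 0) : f ∈ fieldIdeal m K := by
  obtain ⟨p, hp1, hp2⟩ := reduce_poly f
  have hpz : p = 0 := by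
    refine eq_zero_of_eval_eq_zero (Fin m) K p (fun v => ?_) ?_
    · have := eval_fieldIdeal hp1 v
      rw [map_sub, h v, zero_sub, neg_eq_zero] at this
      exact this
    · rw [mem_restrictDegree]
      intro s hs i
      have := (hp2 s hs).1 i
      omega
  rw [hpz, sub_zero] at hp1
  exact hp1

theorem finset_exists_rmax {α : Type*} (r : α → α → Prop)
    (htri : ∀ d e, d ≠ e → r d e ∨ r e d) (htrans : ∀ d e g, r d e → r e g → r d g)
    (s : Finset α) (hs : s.Nonempty) : ∃ d ∈ s, ∀ e ∈ s, e ≠ d → r e d := by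
  classical
  induction s using Finset.induction_on with
  | empty => exact absurd hs (by simp)
  | @insert a s ha IH =>
    by_cases hse : s.Nonempty
    · obtain ⟨d, hd, hmax⟩ := IH hse
      have had : a ≠ d := fun h => ha (h ▸ hd)
      rcases htri a d had with h1 | h1
      · exact ⟨d, Finset.mem_insert_of_mem hd, fun e he hne => by
          rcases Finset.mem_insert.1 he with rfl | he'
          · exact h1
          · exact hmax e he' hne⟩
      · refine ⟨a, Finset.mem_insert_self a s, fun e he hne => ?_⟩
        rcases Finset.mem_insert.1 he with rfl | he'
        · exact absurd rfl hne
        · rcases eq_or_ne e d with rfl | hed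
          · exact h1
          · exact htrans e d a (hmax e he' hed) h1
    · rw [Finset.not_nonempty_iff_eq_empty] at hse
      subst hse
      exact ⟨a, Finset.mem_insert_self a _, fun e he hne => by
        rcases Finset.mem_insert.1 he with rfl | he'
        · exact absurd rfl hne
        · exact absurd he' (by simp)⟩

end Stmt8Aux

open Stmt8Aux
open MvPolynomial in
/-- Footprint bound: for any ideal `J ⊆ F_q[X_1,...,X_m]` and any monomial
ordering `r`, the number of points of `V(J_q)`, where
`J_q = J + ⟨X_1^q - X_1,...,X_m^q - X_m⟩`, equals the cardinality of the footprint
`Δ_r(J_q)`, the set of monomials (exponent vectors) that are not the leading monomial of any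
nonzero polynomial in `J_q`. -/
theorem stmt8 (q m : ℕ) (hq : IsPrimePow q)
    (K : Type) [Field K] [Fintype K] (hcard : Fintype.card K = q)
    (J : Ideal (MvPolynomial (Fin m) K))
    (r : (Fin m →₀ ℕ) → (Fin m →₀ ℕ) → Prop)
    (htri : ∀ d e, d ≠ e → r d e ∨ r e d) (hirr : ∀ d, ¬ r d d)
    (htrans : ∀ d e g, r d e → r e g → r d g)
    (hadd : ∀ d e g, r d e → r (d + g) (e + g))
    (hzero : ∀ d, d ≠ 0 → r 0 d) :
    let Jq := J ⊔ Ideal.span {g | ∃ j : Fin m, g = X j ^ q - X j}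
    -- `IsLM f d` : `d` is the leading monomial of `f` with respect to `r`
    let IsLM : MvPolynomial (Fin m) K → (Fin m →₀ ℕ) → Prop := fun f d =>
      d ∈ f.support ∧ ∀ e ∈ f.support, e ≠ d → r e d
    let Δ : Set (Fin m →₀ ℕ) := {d | ¬ ∃ f ∈ Jq, f ≠ 0 ∧ IsLM f d}
    let V : Set (Fin m → K) := {p | ∀ g ∈ Jq, eval p g = 0}
    Δ.Finite ∧ V.ncard = Δ.ncard := by
  classical
  subst hcard
  intro Jq IsLM Δ V
  haveI : Nontrivial K := Fintype.one_lt_card_iff_nontrivial.1 hq.two_le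
  have hq2 : 1 < Fintype.card K := hq.two_le
  have hIJ : fieldIdeal m K ≤ Jq := le_sup_right
  -- r is compatible with the pointwise order
  have hle : ∀ d e : Fin m →₀ ℕ, d ≤ e → d ≠ e → r d e := by
    intro d e hde hne
    have h2 : e - d ≠ 0 := by
      intro h0
      apply hne
      have := tsub_add_cancel_of_le hde
      rw [h0, zero_add] at this
      exact this
    have := hadd 0 (e - d) d (hzero _ h2)
    rw [zero_add, tsub_add_cancel_of_le hde] at this
    exact this
  -- monomials outside the box are not in Δ
  have hnotbox : ∀ d : Fin m →₀ ℕ, (¬ ∀ j, d j < Fintype.card K) → d ∉ Δ := by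
    intro d hd
    push_neg at hd
    obtain ⟨j, hj⟩ := hd
    set d' := d - Finsupp.single j (Fintype.card K - 1) with hd'
    have hmem := step_mem j d hj
    have hne : d' ≠ d := by
      intro h
      have h2 : d' j = d j := by rw [h]
      rw [hd'] at h2
      simp only [Finsupp.tsub_apply, Finsupp.single_apply, if_pos rfl, if_true] at h2
      omega
    have hcd : coeff d (monomial d (1:K) - monomial d' 1) = 1 := by
      rw [coeff_sub, coeff_monomial, coeff_monomial, if_pos rfl, if_neg hne, sub_zero]
    simp only [Δ, Set.mem_setOf_eq, not_not, IsLM]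
    refine ⟨monomial d 1 - monomial d' 1, hIJ hmem, ?_, ?_, ?_⟩
    · intro h0; rw [h0, coeff_zero] at hcd; exact one_ne_zero hcd.symm
    · exact mem_support_iff.2 (by rw [hcd]; exact one_ne_zero)
    · intro e he hne2
      have hcoe : coeff e (monomial d (1:K) - monomial d' 1) ≠ 0 := mem_support_iff.1 he
      have hed' : e = d' := by
        by_contra hx
        apply hcoe
        rw [coeff_sub, coeff_monomial, coeff_monomial, if_neg (fun h => hne2 h.symm),
          if_neg (fun h => hx h.symm), sub_zero]
      subst hed'
      exact hle _ _ tsub_le_self hne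
  -- the box is finite
  have hBoxFin : {d : Fin m →₀ ℕ | ∀ j, d j < Fintype.card K}.Finite := by
    have h1 : {d : Fin m →₀ ℕ | ∀ j, d j < Fintype.card K}
        ⊆ ⇑Finsupp.equivFunOnFinite ⁻¹'
          (Set.pi Set.univ fun _ : Fin m => Set.Iio (Fintype.card K)) := by
      intro d hd
      simp only [Set.mem_preimage, Set.mem_pi, Set.mem_univ, Set.mem_Iio, forall_true_left]
      intro j
      exact hd j
    exact Set.Finite.subset
      (Set.Finite.preimage Finsupp.equivFunOnFinite.injective.injOn
        (Set.Finite.pi fun _ => Set.finite_Iio _)) h1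
  have hΔfin : Δ.Finite := hBoxFin.subset (fun d hd => by
    by_contra h
    exact hnotbox d h hd)
  refine ⟨hΔfin, ?_⟩
  -- quotient module setup
  set Jq' : Submodule K (MvPolynomial (Fin m) K) := Submodule.restrictScalars K Jq with hJq'def
  set π := Jq'.mkQ with hπdef
  have hπ0 : ∀ f : MvPolynomial (Fin m) K, f ∈ Jq → π f = 0 := fun f hf =>
    (Submodule.Quotient.mk_eq_zero _).2 hf
  set SΔ : Set (MvPolynomial (Fin m) K ⧸ Jq') :=
    π '' ((fun d : Fin m →₀ ℕ => (monomial d (1:K) : MvPolynomial (Fin m) K)) '' Δ) with hSΔdef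
  have hπsum : ∀ f : MvPolynomial (Fin m) K,
      π f = ∑ e ∈ f.support, coeff e f • π (monomial e 1) := by
    intro f
    conv_lhs => rw [← support_sum_monomial_coeff f]
    rw [map_sum]
    refine Finset.sum_congr rfl fun e _ => ?_
    rw [← map_smul, smul_monomial, smul_eq_mul, mul_one]
  -- every box monomial lies in the span of Δ-monomials modulo Jq
  have keyB : ∀ d : Fin m →₀ ℕ, (∀ j, d j < Fintype.card K) →
      π (monomial d 1) ∈ Submodule.span K SΔ := by
    haveI hfinB : Finite ↥{d : Fin m →₀ ℕ | ∀ j, d j < Fintype.card K} := hBoxFin.to_subtype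
    set B := ↥{d : Fin m →₀ ℕ | ∀ j, d j < Fintype.card K} with hB
    set rB : B → B → Prop := fun a b => r a.1 b.1 with hrB
    have hwf : WellFounded rB := by
      haveI : IsTrans B rB := ⟨fun a b c hab hbc => htrans _ _ _ hab hbc⟩
      haveI : IsIrrefl B rB := ⟨fun a => hirr a.1⟩
      exact Finite.wellFounded_of_trans_of_irrefl rB
    suffices h : ∀ b : B, π (monomial b.1 1) ∈ Submodule.span K SΔ by
      intro d hd
      exact h ⟨d, hd⟩
    intro b
    refine hwf.induction
      (C := fun b : B => π (monomial b.1 1) ∈ Submodule.span K SΔ) b ?_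
    rintro ⟨d, hd⟩ IH
    by_cases hdΔ : d ∈ Δ
    · exact Submodule.subset_span ⟨monomial d 1, ⟨d, hdΔ, rfl⟩, rfl⟩
    · have hdΔ' : ∃ f ∈ Jq, f ≠ 0 ∧ (d ∈ f.support ∧ ∀ e ∈ f.support, e ≠ d → r e d) := by
        have := hdΔ
        simp only [Δ, Set.mem_setOf_eq, not_not, IsLM] at this
        exact this
      obtain ⟨g, hgJ, hg0, hgsup, hglm⟩ := hdΔ'
      have hc : coeff d g ≠ 0 := mem_support_iff.1 hgsup
      have hsub : ∀ e : Fin m →₀ ℕ, r e d → π (monomial e 1) ∈ Submodule.span K SΔ := by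
        intro e hre
        obtain ⟨p, hp1, hp2⟩ := reduce_monomial (K := K) (e.sum fun _ k => k) e (le_refl _)
        have hπe : π (monomial e 1) = π p := by
          rw [← sub_eq_zero, ← map_sub]
          exact hπ0 _ (hIJ hp1)
        rw [hπe, hπsum p]
        refine Submodule.sum_mem _ fun d' hd' => Submodule.smul_mem _ _ ?_
        have hbox' := (hp2 d' hd').1
        have hled : rB ⟨d', hbox'⟩ ⟨d, hd⟩ := by
          show r d' d
          rcases eq_or_ne d' e with rfl | hne
          · exact hre
          · exact htrans _ _ _ (hle d' e (hp2 d' hd').2 hne) hre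
        exact IH ⟨d', hbox'⟩ hled
      set h := monomial d (1:K) - (coeff d g)⁻¹ • g with hhdef
      have hπh : π (monomial d 1) = π h := by
        have hz : π ((coeff d g)⁻¹ • g) = 0 := by
          apply hπ0
          rw [smul_eq_C_mul]
          exact Ideal.mul_mem_left _ _ hgJ
        rw [hhdef, map_sub, hz, sub_zero]
      rw [hπh, hπsum h]
      refine Submodule.sum_mem _ fun e he => Submodule.smul_mem _ _ ?_
      apply hsub
      have he0 : coeff e h ≠ 0 := mem_support_iff.1 he
      have hed : e ≠ d := by
        rintro rfl
        apply he0
        rw [hhdef, coeff_sub, coeff_monomial, if_pos rfl, coeff_smul, smul_eq_mul,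
          inv_mul_cancel₀ hc, sub_self]
      have heg : e ∈ g.support := by
        rw [mem_support_iff]
        intro hz
        apply he0
        rw [hhdef, coeff_sub, coeff_monomial, if_neg (fun hx => hed hx.symm), coeff_smul, hz,
          smul_zero, sub_zero]
      exact hglm e heg hed
  -- the span of Δ-monomials is everything
  have hspan : ∀ x : MvPolynomial (Fin m) K ⧸ Jq', x ∈ Submodule.span K SΔ := by
    intro x
    obtain ⟨f, rfl⟩ := Submodule.mkQ_surjective Jq' x
    obtain ⟨p, hp1, hp2⟩ := reduce_poly f
    have hπf : π f = π p := by
      rw [← sub_eq_zero, ← map_sub]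
      exact hπ0 _ (hIJ hp1)
    show π f ∈ _
    rw [hπf, hπsum p]
    exact Submodule.sum_mem _ fun d hd => Submodule.smul_mem _ _ (keyB d (hp2 d hd).1)
  -- linear independence of Δ-monomials modulo Jq
  haveI := hΔfin.fintype
  set v : ↥Δ → (MvPolynomial (Fin m) K ⧸ Jq') := fun d => π (monomial d.1 1) with hvdef
  have hli : LinearIndependent K v := by
    rw [Fintype.linearIndependent_iff]
    intro g hg
    by_contra hcon
    push_neg at hcon
    obtain ⟨i0, hi0⟩ := hcon
    set f : MvPolynomial (Fin m) K := ∑ i : ↥Δ, g i • monomial i.1 1 with hfdef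
    have hπf : π f = 0 := by
      rw [hfdef, map_sum, ← hg]
      refine Finset.sum_congr rfl fun i _ => ?_
      rw [map_smul, hvdef]
    have hfJ : f ∈ Jq := (Submodule.Quotient.mk_eq_zero Jq').1 hπf
    have hcoeff : ∀ i : ↥Δ, coeff i.1 f = g i := by
      intro i
      rw [hfdef, coeff_sum, Finset.sum_eq_single i]
      · rw [coeff_smul, coeff_monomial, if_pos rfl, smul_eq_mul, mul_one]
      · intro b _ hbne
        rw [coeff_smul, coeff_monomial, if_neg (fun h => hbne (Subtype.ext h)), smul_zero]
      · intro h
        exact absurd (Finset.mem_univ i) h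
    have hf0 : f ≠ 0 := fun h => hi0 (by rw [← hcoeff i0, h, coeff_zero])
    have hsupΔ : ∀ e ∈ f.support, e ∈ Δ := by
      intro e he
      have hce : coeff e f ≠ 0 := mem_support_iff.1 he
      rw [hfdef, coeff_sum] at hce
      obtain ⟨i, _, hne⟩ := Finset.exists_ne_zero_of_sum_ne_zero hce
      rw [coeff_smul, coeff_monomial] at hne
      by_cases hie : (i.1 : Fin m →₀ ℕ) = e
      · exact hie ▸ i.2
      · rw [if_neg hie, smul_zero] at hne
        exact absurd rfl hne
    obtain ⟨dstar, hdmem, hdmax⟩ := finset_exists_rmax r htri htrans f.support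
      (support_nonempty.2 hf0)
    have hmem : dstar ∈ Δ := hsupΔ _ hdmem
    simp only [Δ, Set.mem_setOf_eq, IsLM] at hmem
    exact hmem ⟨f, hfJ, hf0, hdmem, hdmax⟩
  have hrange : Set.range v = SΔ := by
    rw [hSΔdef, Set.image_image, Set.image_eq_range]
  let bas : Module.Basis ↥Δ K (MvPolynomial (Fin m) K ⧸ Jq') :=
    Module.Basis.mk hli (by rw [hrange]; intro x _; exact hspan x)
  have hdim1 : Module.finrank K (MvPolynomial (Fin m) K ⧸ Jq') = Fintype.card ↥Δ :=
    Module.finrank_eq_card_basis bas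
  -- the evaluation map
  let ψ : MvPolynomial (Fin m) K →ₗ[K] (↥V → K) :=
    { toFun := fun f p => eval p.1 f
      map_add' := fun f g => by funext p; simp
      map_smul' := fun c f => by funext p; simp }
  have hindJq : ∀ p : Fin m → K, p ∉ V → indicator p ∈ Jq := by
    intro p hp
    have hex : ∃ g ∈ Jq, eval p g ≠ 0 := by
      simp only [V, Set.mem_setOf_eq, not_forall] at hp
      obtain ⟨g, hg1, hg2⟩ := hp
      exact ⟨g, hg1, hg2⟩
    obtain ⟨g, hgJ, hgp⟩ := hex
    set t := C (eval p g)⁻¹ * (g * indicator p) with htdef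
    have htJ : t ∈ Jq := Ideal.mul_mem_left _ _ (Ideal.mul_mem_right _ _ hgJ)
    have hIt : indicator p - t ∈ fieldIdeal m K := by
      apply mem_fieldIdeal_of_eval_zero
      intro w
      rw [map_sub, htdef, map_mul, map_mul, eval_C]
      rcases eq_or_ne w p with rfl | hwp
      · rw [eval_indicator_apply_eq_one, mul_one, inv_mul_cancel₀ hgp, sub_self]
      · rw [eval_indicator_apply_eq_zero w p hwp, mul_zero, mul_zero, sub_zero]
    have heq : indicator p = (indicator p - t) + t := by ring
    rw [heq]
    exact Ideal.add_mem _ (hIJ hIt) htJ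
  have hker : LinearMap.ker ψ = Jq' := by
    ext f
    simp only [LinearMap.mem_ker]
    constructor
    · intro hf
      have hfv : ∀ p ∈ V, eval p f = 0 := fun p hp => congrFun hf ⟨p, hp⟩
      set s := ∑ p : Fin m → K, eval p f • indicator p with hsdef
      have h1 : f - s ∈ fieldIdeal m K := by
        apply mem_fieldIdeal_of_eval_zero
        intro w
        rw [map_sub, hsdef, map_sum]
        have hsum : ∑ p : Fin m → K, eval w (eval p f • indicator p) = eval w f := by
          rw [Finset.sum_eq_single w]
          · rw [smul_eq_C_mul, map_mul, eval_C, eval_indicator_apply_eq_one, mul_one]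
          · intro b _ hbw
            rw [smul_eq_C_mul, map_mul, eval_C,
              eval_indicator_apply_eq_zero w b (fun h => hbw h.symm), mul_zero]
          · intro h
            exact absurd (Finset.mem_univ w) h
        rw [hsum, sub_self]
      have h2 : s ∈ Jq := by
        rw [hsdef]
        refine Ideal.sum_mem _ fun p _ => ?_
        by_cases hpV : p ∈ V
        · rw [hfv p hpV, zero_smul]
          exact Ideal.zero_mem _
        · rw [smul_eq_C_mul]
          exact Ideal.mul_mem_left _ _ (hindJq p hpV)
      have heq : f = (f - s) + s := by ring
      show f ∈ Jq'
      rw [heq]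
      exact Ideal.add_mem _ (hIJ h1) h2
    · intro hf
      funext p
      exact p.2 f hf
  have hsurj : Function.Surjective ψ := by
    intro u
    refine ⟨∑ p : Fin m → K, (if h : p ∈ V then u ⟨p, h⟩ else 0) • indicator p, ?_⟩
    funext pv
    obtain ⟨p, hp⟩ := pv
    show eval p (∑ p' : Fin m → K, (if h : p' ∈ V then u ⟨p', h⟩ else 0) • indicator p')
      = u ⟨p, hp⟩
    rw [map_sum, Finset.sum_eq_single p]
    · rw [smul_eq_C_mul, map_mul, eval_C, eval_indicator_apply_eq_one, mul_one, dif_pos hp]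
    · intro b _ hbp
      rw [smul_eq_C_mul, map_mul, eval_C,
        eval_indicator_apply_eq_zero p b (fun h => hbp h.symm), mul_zero]
    · intro h
      exact absurd (Finset.mem_univ p) h
  haveI : Fintype ↥V := Fintype.ofFinite _
  have e1 : (MvPolynomial (Fin m) K ⧸ Jq') ≃ₗ[K] (↥V → K) :=
    (Submodule.quotEquivOfEq _ _ hker.symm).trans (ψ.quotKerEquivOfSurjective hsurj)
  have hdim2 : Module.finrank K (↥V → K) = Fintype.card ↥V :=
    Module.finrank_fintype_fun_eq_card K
  have hcards : Fintype.card ↥V = Fintype.card ↥Δ := by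
    rw [← hdim2, ← e1.finrank_eq, hdim1]
  have hV : V.ncard = Fintype.card ↥V := by
    rw [← Nat.card_coe_set_eq, Nat.card_eq_fintype_card]
  have hΔ : Δ.ncard = Fintype.card ↥Δ := by
    rw [← Nat.card_coe_set_eq, Nat.card_eq_fintype_card]
  rw [hV, hΔ, hcards]
end
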